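/- Let α > −1 and let q ≥ 0 be an integer. The sequence (P_n^{α,q})_{n≥0} satisfies P_0^{α,q}(x) = 1, P_1^{α,q}(x) = x + 1, and for every integer n ≥ 0 and every real x the three-term recurrence P_{n+2}^{α,q}(x) = (x − (−1)^n) P_{n+1}^{α,q}(x) − γ_{n+1}^{α,q} P_n^{α,q}(x), where for m ≥ 1, γ_{2m}^{α,q} = −2 m (2m+2q+1) / [(4m+2α+2q+1)(4m+2α+2q+3)] and for m ≥ 0, γ_{2m+1}^{α,q} = −2 (m+α+1)(2m+2α+2q+3) / [(4m+2α+2q+3)(4m+2α+2q+5)]. -/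
import Mathlib


open MeasureTheory intervalIntegral Polynomial

/-- Pochhammer symbol `(a)_k = a (a+1) ⋯ (a+k-1)`. -/
noncomputable def poch (a : ℝ) (k : ℕ) : ℝ := ∏ i ∈ Finset.range k, (a + i)

/-- `Peven α q n x = P_{2n}^{α,q}(x)`, the monic generalized Gegenbauer-type polynomial
`Σ_{k=0}^{n} (−n)_k (−n−q−1/2)_k / (k! (−2n−α−q−1/2)_k) x^{2n−2k}`. -/
noncomputable def Peven (α : ℝ) (q n : ℕ) (x : ℝ) : ℝ :=
  ∑ k ∈ Finset.range (n + 1),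
    poch (-(n : ℝ)) k * poch (-(n : ℝ) - q - 1/2) k /
      ((Nat.factorial k : ℝ) * poch (-(2 * (n : ℝ)) - α - q - 1/2) k) * x ^ (2*n - 2*k)

/-- `Podd α q n x = P_{2n+1}^{α,q}(x) = (1+x) P_{2n}^{α+1,q}(x)`. -/
noncomputable def Podd (α : ℝ) (q n : ℕ) (x : ℝ) : ℝ := (1 + x) * Peven (α + 1) q n x

/-- `P α q n x = P_n^{α,q}(x)`. -/
noncomputable def P (α : ℝ) (q : ℕ) (n : ℕ) (x : ℝ) : ℝ :=
  if Even n then Peven α q (n / 2) x else Podd α q (n / 2) x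

lemma poch_zero (a : ℝ) : poch a 0 = 1 := by simp [poch]

lemma poch_succ (a : ℝ) (k : ℕ) : poch a (k+1) = poch a k * (a + k) := by
  simp [poch, Finset.prod_range_succ]

lemma poch_succ' (a : ℝ) (k : ℕ) : poch a (k+1) = a * poch (a+1) k := by
  rw [poch, Finset.prod_range_succ']
  rw [mul_comm]
  congr 1
  · simp
  · apply Finset.prod_congr rfl
    intro i _
    push_cast
    ring

lemma poch_ne_zero_of_neg {a : ℝ} {k : ℕ} (h : a + k - 1 < 0) : poch a k ≠ 0 := by
  rw [poch]
  apply Finset.prod_ne_zero_iff.mpr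
  intro i hi
  have hik : (i:ℝ) + 1 ≤ k := by exact_mod_cast Finset.mem_range.mp hi
  have : a + i < 0 := by linarith
  linarith

noncomputable def cc (α : ℝ) (q : ℕ) (n k : ℕ) : ℝ :=
  poch (-(n : ℝ)) k * poch (-(n : ℝ) - q - 1/2) k /
      ((Nat.factorial k : ℝ) * poch (-(2 * (n : ℝ)) - α - q - 1/2) k)

lemma cc_eval (α : ℝ) (q n k : ℕ) {a₁ a₂ a₃ : ℝ}
    (h1 : a₁ = -(n:ℝ)) (h2 : a₂ = -(n:ℝ) - q - 1/2)
    (h3 : a₃ = -(2*(n:ℝ)) - α - q - 1/2) :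
    cc α q n k = poch a₁ k * poch a₂ k / ((k.factorial : ℝ) * poch a₃ k) := by
  subst h1; subst h2; subst h3; rfl

set_option maxHeartbeats 1000000 in
lemma keyB (α : ℝ) (hα : -1 < α) (q n k : ℕ) (hk : k ≤ n) :
    cc α q (n+1) (k+1) =
      cc (α+1) q n (k+1) - cc (α+1) q n k
        - (-2 * ((n:ℝ) + α + 1) * (2*(n:ℝ) + 2*α + 2*q + 3) /
            ((4*(n:ℝ) + 2*α + 2*q + 3) * (4*(n:ℝ) + 2*α + 2*q + 5))) * cc α q n k := by
  have hk' : (k:ℝ) ≤ n := by exact_mod_cast hk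
  have hq : (0:ℝ) ≤ q := Nat.cast_nonneg q
  have hn : (0:ℝ) ≤ n := Nat.cast_nonneg n
  have hd1 : (4*(n:ℝ) + 2*α + 2*q + 3) ≠ 0 := ne_of_gt (by linarith)
  have hd2 : (4*(n:ℝ) + 2*α + 2*q + 5) ≠ 0 := ne_of_gt (by linarith)
  have hf : (k.factorial : ℝ) ≠ 0 := Nat.cast_ne_zero.mpr k.factorial_ne_zero
  have hf1 : ((k+1).factorial : ℝ) ≠ 0 := Nat.cast_ne_zero.mpr (k+1).factorial_ne_zero
  have hk1 : ((k:ℝ) + 1) ≠ 0 := by positivity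
  have hWne : poch (-(2*(n:ℝ)) - α - q - 1/2) k ≠ 0 := poch_ne_zero_of_neg (by linarith)
  have hP0 : poch (-(2*(n:ℝ)) - α - q - 1/2 - 1) k ≠ 0 := poch_ne_zero_of_neg (by linarith)
  have hP1 : poch (-(2*(n:ℝ)) - α - q - 1/2 - 1) (k+1) ≠ 0 :=
    poch_ne_zero_of_neg (by push_cast; linarith)
  have hP2 : poch (-(2*(n:ℝ)) - α - q - 1/2 - 2) (k+1) ≠ 0 :=
    poch_ne_zero_of_neg (by push_cast; linarith)
  have hb1lt : (-(2*(n:ℝ)) - α - q - 1/2) - 1 < 0 := by linarith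
  have hb2lt : (-(2*(n:ℝ)) - α - q - 1/2) - 2 < 0 := by linarith
  have hT : ((((k:ℝ)+1) * (k.factorial : ℝ) * poch (-(2*(n:ℝ)) - α - q - 1/2) k)
      * ((-(2*(n:ℝ)) - α - q - 1/2 - 1) * (-(2*(n:ℝ)) - α - q - 1/2 - 2))
      * ((4*(n:ℝ) + 2*α + 2*q + 3) * (4*(n:ℝ) + 2*α + 2*q + 5))) ≠ 0 := by
    apply mul_ne_zero
    apply mul_ne_zero
    · exact mul_ne_zero (mul_ne_zero hk1 hf) hWne
    · exact mul_ne_zero (ne_of_lt hb1lt) (ne_of_lt hb2lt)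
    · exact mul_ne_zero hd1 hd2
  -- poch expansions
  have pU1 : poch (-(n:ℝ)) (k+1) = poch (-(n:ℝ)) k * (-(n:ℝ) + k) := poch_succ _ _
  have pV1 : poch (-(n:ℝ) - q - 1/2) (k+1)
      = poch (-(n:ℝ) - q - 1/2) k * (-(n:ℝ) - q - 1/2 + k) := poch_succ _ _
  have pNU : poch (-(n:ℝ) - 1) (k+1) = (-(n:ℝ) - 1) * poch (-(n:ℝ)) k := by
    rw [poch_succ', show -(n:ℝ) - 1 + 1 = -(n:ℝ) by ring]
  have pNV : poch (-(n:ℝ) - 1 - q - 1/2) (k+1)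
      = (-(n:ℝ) - 1 - q - 1/2) * poch (-(n:ℝ) - q - 1/2) k := by
    rw [poch_succ', show -(n:ℝ) - 1 - q - 1/2 + 1 = -(n:ℝ) - q - 1/2 by ring]
  have r1 : poch (-(2*(n:ℝ)) - α - q - 1/2 - 1) (k+1)
      = (-(2*(n:ℝ)) - α - q - 1/2 - 1) * poch (-(2*(n:ℝ)) - α - q - 1/2) k := by
    rw [poch_succ', show -(2*(n:ℝ)) - α - q - 1/2 - 1 + 1 = -(2*(n:ℝ)) - α - q - 1/2 by ring]
  have r2 : poch (-(2*(n:ℝ)) - α - q - 1/2 - 1) k * (-(2*(n:ℝ)) - α - q - 1/2 + k - 1)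
      = (-(2*(n:ℝ)) - α - q - 1/2 - 1) * poch (-(2*(n:ℝ)) - α - q - 1/2) k := by
    have h := poch_succ (-(2*(n:ℝ)) - α - q - 1/2 - 1) k
    rw [r1] at h
    linear_combination -h
  have r3 : poch (-(2*(n:ℝ)) - α - q - 1/2 - 2) (k+1) * (-(2*(n:ℝ)) - α - q - 1/2 + k - 1)
      = (-(2*(n:ℝ)) - α - q - 1/2 - 2) *
        ((-(2*(n:ℝ)) - α - q - 1/2 - 1) * poch (-(2*(n:ℝ)) - α - q - 1/2) k) := by
    have h2 : poch (-(2*(n:ℝ)) - α - q - 1/2 - 2) (k+1)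
        = (-(2*(n:ℝ)) - α - q - 1/2 - 2) * poch (-(2*(n:ℝ)) - α - q - 1/2 - 1) k := by
      rw [poch_succ', show -(2*(n:ℝ)) - α - q - 1/2 - 2 + 1 = -(2*(n:ℝ)) - α - q - 1/2 - 1 by ring]
    linear_combination (-(2*(n:ℝ)) - α - q - 1/2 + k - 1) * h2
      + (-(2*(n:ℝ)) - α - q - 1/2 - 2) * r2
  have hfact : (((k+1).factorial : ℕ) : ℝ) = ((k:ℝ)+1) * (k.factorial : ℝ) := by
    rw [Nat.factorial_succ]; push_cast; ring
  -- cleared forms of the cc values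
  have E1 : cc α q (n+1) (k+1) = poch (-(n:ℝ) - 1) (k+1) * poch (-(n:ℝ) - 1 - q - 1/2) (k+1) /
      (((k+1).factorial : ℝ) * poch (-(2*(n:ℝ)) - α - q - 1/2 - 2) (k+1)) :=
    cc_eval α q (n+1) (k+1) (by push_cast; ring) (by push_cast; ring) (by push_cast; ring)
  have E2 : cc (α+1) q n (k+1) = poch (-(n:ℝ)) (k+1) * poch (-(n:ℝ) - q - 1/2) (k+1) /
      (((k+1).factorial : ℝ) * poch (-(2*(n:ℝ)) - α - q - 1/2 - 1) (k+1)) :=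
    cc_eval (α+1) q n (k+1) rfl rfl (by ring)
  have E3 : cc (α+1) q n k = poch (-(n:ℝ)) k * poch (-(n:ℝ) - q - 1/2) k /
      ((k.factorial : ℝ) * poch (-(2*(n:ℝ)) - α - q - 1/2 - 1) k) :=
    cc_eval (α+1) q n k rfl rfl (by ring)
  have E4 : cc α q n k = poch (-(n:ℝ)) k * poch (-(n:ℝ) - q - 1/2) k /
      ((k.factorial : ℝ) * poch (-(2*(n:ℝ)) - α - q - 1/2) k) := rfl
  have m1 : cc α q (n+1) (k+1) * (((k+1).factorial : ℝ) *
      poch (-(2*(n:ℝ)) - α - q - 1/2 - 2) (k+1))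
      = poch (-(n:ℝ) - 1) (k+1) * poch (-(n:ℝ) - 1 - q - 1/2) (k+1) := by
    rw [E1]; exact div_mul_cancel₀ _ (mul_ne_zero hf1 hP2)
  have m2 : cc (α+1) q n (k+1) * (((k+1).factorial : ℝ) *
      poch (-(2*(n:ℝ)) - α - q - 1/2 - 1) (k+1))
      = poch (-(n:ℝ)) (k+1) * poch (-(n:ℝ) - q - 1/2) (k+1) := by
    rw [E2]; exact div_mul_cancel₀ _ (mul_ne_zero hf1 hP1)
  have m3 : cc (α+1) q n k * ((k.factorial : ℝ) * poch (-(2*(n:ℝ)) - α - q - 1/2 - 1) k)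
      = poch (-(n:ℝ)) k * poch (-(n:ℝ) - q - 1/2) k := by
    rw [E3]; exact div_mul_cancel₀ _ (mul_ne_zero hf hP0)
  have m4 : cc α q n k * ((k.factorial : ℝ) * poch (-(2*(n:ℝ)) - α - q - 1/2) k)
      = poch (-(n:ℝ)) k * poch (-(n:ℝ) - q - 1/2) k := by
    rw [E4]; exact div_mul_cancel₀ _ (mul_ne_zero hf hWne)
  rw [pNU, pNV, hfact] at m1
  rw [pU1, pV1, hfact, r1] at m2
  have m1' : cc α q (n+1) (k+1) * (((k:ℝ)+1) * (k.factorial : ℝ) *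
      ((-(2*(n:ℝ)) - α - q - 1/2 - 2) * ((-(2*(n:ℝ)) - α - q - 1/2 - 1) *
        poch (-(2*(n:ℝ)) - α - q - 1/2) k)))
      = (-(n:ℝ) - 1) * poch (-(n:ℝ)) k * ((-(n:ℝ) - 1 - q - 1/2) * poch (-(n:ℝ) - q - 1/2) k)
        * (-(2*(n:ℝ)) - α - q - 1/2 + k - 1) := by
    linear_combination (-(2*(n:ℝ)) - α - q - 1/2 + k - 1) * m1
      - (cc α q (n+1) (k+1) * (((k:ℝ)+1) * (k.factorial : ℝ))) * r3
  have m3' : cc (α+1) q n k * ((k.factorial : ℝ) * ((-(2*(n:ℝ)) - α - q - 1/2 - 1) *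
      poch (-(2*(n:ℝ)) - α - q - 1/2) k))
      = poch (-(n:ℝ)) k * poch (-(n:ℝ) - q - 1/2) k * (-(2*(n:ℝ)) - α - q - 1/2 + k - 1) := by
    linear_combination (-(2*(n:ℝ)) - α - q - 1/2 + k - 1) * m3
      - (cc (α+1) q n k * (k.factorial : ℝ)) * r2
  have hγ : (-2 * ((n:ℝ) + α + 1) * (2*(n:ℝ) + 2*α + 2*q + 3) /
        ((4*(n:ℝ) + 2*α + 2*q + 3) * (4*(n:ℝ) + 2*α + 2*q + 5)))
      * ((4*(n:ℝ) + 2*α + 2*q + 3) * (4*(n:ℝ) + 2*α + 2*q + 5))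
      = -2 * ((n:ℝ) + α + 1) * (2*(n:ℝ) + 2*α + 2*q + 3) :=
    div_mul_cancel₀ _ (mul_ne_zero hd1 hd2)
  apply mul_right_cancel₀ hT
  linear_combination
    ((4*(n:ℝ) + 2*α + 2*q + 3) * (4*(n:ℝ) + 2*α + 2*q + 5)) * m1'
    - ((-(2*(n:ℝ)) - α - q - 1/2 - 2) *
        ((4*(n:ℝ) + 2*α + 2*q + 3) * (4*(n:ℝ) + 2*α + 2*q + 5))) * m2
    + (((k:ℝ)+1) * (-(2*(n:ℝ)) - α - q - 1/2 - 2) *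
        ((4*(n:ℝ) + 2*α + 2*q + 3) * (4*(n:ℝ) + 2*α + 2*q + 5))) * m3'
    + (cc α q n k * (((k:ℝ)+1) * (k.factorial : ℝ) * poch (-(2*(n:ℝ)) - α - q - 1/2) k
        * (-(2*(n:ℝ)) - α - q - 1/2 - 1) * (-(2*(n:ℝ)) - α - q - 1/2 - 2))) * hγ
    + ((-2 * ((n:ℝ) + α + 1) * (2*(n:ℝ) + 2*α + 2*q + 3)) * (((k:ℝ)+1)
        * (-(2*(n:ℝ)) - α - q - 1/2 - 1) * (-(2*(n:ℝ)) - α - q - 1/2 - 2))) * m4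
set_option maxHeartbeats 1000000 in
lemma keyA (α : ℝ) (hα : -1 < α) (q n k : ℕ) (hk : k ≤ n) :
    cc (α+1) q (n+1) (k+1) =
      cc α q (n+1) (k+1)
        - (-2 * ((n:ℝ)+1) * (2*((n:ℝ)+1) + 2*q + 1) /
            ((4*((n:ℝ)+1) + 2*α + 2*q + 1) * (4*((n:ℝ)+1) + 2*α + 2*q + 3))) *
          cc (α+1) q n k := by
  have hk' : (k:ℝ) ≤ n := by exact_mod_cast hk
  have hq : (0:ℝ) ≤ q := Nat.cast_nonneg q
  have hn : (0:ℝ) ≤ n := Nat.cast_nonneg n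
  have hd1 : (4*((n:ℝ)+1) + 2*α + 2*q + 1) ≠ 0 := ne_of_gt (by linarith)
  have hd2 : (4*((n:ℝ)+1) + 2*α + 2*q + 3) ≠ 0 := ne_of_gt (by linarith)
  have hf : (k.factorial : ℝ) ≠ 0 := Nat.cast_ne_zero.mpr k.factorial_ne_zero
  have hf1 : ((k+1).factorial : ℝ) ≠ 0 := Nat.cast_ne_zero.mpr (k+1).factorial_ne_zero
  have hk1 : ((k:ℝ) + 1) ≠ 0 := by positivity
  have hWne : poch (-(2*(n:ℝ)) - α - q - 1/2) k ≠ 0 := poch_ne_zero_of_neg (by linarith)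
  have hP0 : poch (-(2*(n:ℝ)) - α - q - 1/2 - 1) k ≠ 0 := poch_ne_zero_of_neg (by linarith)
  have hP2 : poch (-(2*(n:ℝ)) - α - q - 1/2 - 2) (k+1) ≠ 0 :=
    poch_ne_zero_of_neg (by push_cast; linarith)
  have hP3 : poch (-(2*(n:ℝ)) - α - q - 1/2 - 3) (k+1) ≠ 0 :=
    poch_ne_zero_of_neg (by push_cast; linarith)
  have hb1lt : (-(2*(n:ℝ)) - α - q - 1/2) - 1 < 0 := by linarith
  have hb2lt : (-(2*(n:ℝ)) - α - q - 1/2) - 2 < 0 := by linarith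
  have hb3lt : (-(2*(n:ℝ)) - α - q - 1/2) - 3 < 0 := by linarith
  have hT : ((((k:ℝ)+1) * (k.factorial : ℝ) * poch (-(2*(n:ℝ)) - α - q - 1/2) k)
      * ((-(2*(n:ℝ)) - α - q - 1/2 - 1) * (-(2*(n:ℝ)) - α - q - 1/2 - 2)
          * (-(2*(n:ℝ)) - α - q - 1/2 - 3))
      * ((4*((n:ℝ)+1) + 2*α + 2*q + 1) * (4*((n:ℝ)+1) + 2*α + 2*q + 3))) ≠ 0 := by
    apply mul_ne_zero
    apply mul_ne_zero
    · exact mul_ne_zero (mul_ne_zero hk1 hf) hWne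
    · exact mul_ne_zero (mul_ne_zero (ne_of_lt hb1lt) (ne_of_lt hb2lt)) (ne_of_lt hb3lt)
    · exact mul_ne_zero hd1 hd2
  have pNU : poch (-(n:ℝ) - 1) (k+1) = (-(n:ℝ) - 1) * poch (-(n:ℝ)) k := by
    rw [poch_succ', show -(n:ℝ) - 1 + 1 = -(n:ℝ) by ring]
  have pNV : poch (-(n:ℝ) - 1 - q - 1/2) (k+1)
      = (-(n:ℝ) - 1 - q - 1/2) * poch (-(n:ℝ) - q - 1/2) k := by
    rw [poch_succ', show -(n:ℝ) - 1 - q - 1/2 + 1 = -(n:ℝ) - q - 1/2 by ring]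
  have r1 : poch (-(2*(n:ℝ)) - α - q - 1/2 - 1) (k+1)
      = (-(2*(n:ℝ)) - α - q - 1/2 - 1) * poch (-(2*(n:ℝ)) - α - q - 1/2) k := by
    rw [poch_succ', show -(2*(n:ℝ)) - α - q - 1/2 - 1 + 1 = -(2*(n:ℝ)) - α - q - 1/2 by ring]
  have r2 : poch (-(2*(n:ℝ)) - α - q - 1/2 - 1) k * (-(2*(n:ℝ)) - α - q - 1/2 + k - 1)
      = (-(2*(n:ℝ)) - α - q - 1/2 - 1) * poch (-(2*(n:ℝ)) - α - q - 1/2) k := by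
    have h := poch_succ (-(2*(n:ℝ)) - α - q - 1/2 - 1) k
    rw [r1] at h
    linear_combination -h
  have h2 : poch (-(2*(n:ℝ)) - α - q - 1/2 - 2) (k+1)
      = (-(2*(n:ℝ)) - α - q - 1/2 - 2) * poch (-(2*(n:ℝ)) - α - q - 1/2 - 1) k := by
    rw [poch_succ', show -(2*(n:ℝ)) - α - q - 1/2 - 2 + 1 = -(2*(n:ℝ)) - α - q - 1/2 - 1 by ring]
  have r3 : poch (-(2*(n:ℝ)) - α - q - 1/2 - 2) (k+1) * (-(2*(n:ℝ)) - α - q - 1/2 + k - 1)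
      = (-(2*(n:ℝ)) - α - q - 1/2 - 2) *
        ((-(2*(n:ℝ)) - α - q - 1/2 - 1) * poch (-(2*(n:ℝ)) - α - q - 1/2) k) := by
    linear_combination (-(2*(n:ℝ)) - α - q - 1/2 + k - 1) * h2
      + (-(2*(n:ℝ)) - α - q - 1/2 - 2) * r2
  have r5 : poch (-(2*(n:ℝ)) - α - q - 1/2 - 2) k
        * ((-(2*(n:ℝ)) - α - q - 1/2 + k - 2) * (-(2*(n:ℝ)) - α - q - 1/2 + k - 1))
      = (-(2*(n:ℝ)) - α - q - 1/2 - 2) *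
        ((-(2*(n:ℝ)) - α - q - 1/2 - 1) * poch (-(2*(n:ℝ)) - α - q - 1/2) k) := by
    have h := poch_succ (-(2*(n:ℝ)) - α - q - 1/2 - 2) k
    linear_combination r3 - (-(2*(n:ℝ)) - α - q - 1/2 + k - 1) * h
  have h3 : poch (-(2*(n:ℝ)) - α - q - 1/2 - 3) (k+1)
      = (-(2*(n:ℝ)) - α - q - 1/2 - 3) * poch (-(2*(n:ℝ)) - α - q - 1/2 - 2) k := by
    rw [poch_succ', show -(2*(n:ℝ)) - α - q - 1/2 - 3 + 1 = -(2*(n:ℝ)) - α - q - 1/2 - 2 by ring]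
  have r4 : poch (-(2*(n:ℝ)) - α - q - 1/2 - 3) (k+1)
        * ((-(2*(n:ℝ)) - α - q - 1/2 + k - 2) * (-(2*(n:ℝ)) - α - q - 1/2 + k - 1))
      = (-(2*(n:ℝ)) - α - q - 1/2 - 3) * ((-(2*(n:ℝ)) - α - q - 1/2 - 2) *
        ((-(2*(n:ℝ)) - α - q - 1/2 - 1) * poch (-(2*(n:ℝ)) - α - q - 1/2) k)) := by
    linear_combination ((-(2*(n:ℝ)) - α - q - 1/2 + k - 2)
        * (-(2*(n:ℝ)) - α - q - 1/2 + k - 1)) * h3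
      + (-(2*(n:ℝ)) - α - q - 1/2 - 3) * r5
  have hfact : (((k+1).factorial : ℕ) : ℝ) = ((k:ℝ)+1) * (k.factorial : ℝ) := by
    rw [Nat.factorial_succ]; push_cast; ring
  have EL : cc (α+1) q (n+1) (k+1) = poch (-(n:ℝ) - 1) (k+1) * poch (-(n:ℝ) - 1 - q - 1/2) (k+1) /
      (((k+1).factorial : ℝ) * poch (-(2*(n:ℝ)) - α - q - 1/2 - 3) (k+1)) :=
    cc_eval (α+1) q (n+1) (k+1) (by push_cast; ring) (by push_cast; ring) (by push_cast; ring)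
  have E1 : cc α q (n+1) (k+1) = poch (-(n:ℝ) - 1) (k+1) * poch (-(n:ℝ) - 1 - q - 1/2) (k+1) /
      (((k+1).factorial : ℝ) * poch (-(2*(n:ℝ)) - α - q - 1/2 - 2) (k+1)) :=
    cc_eval α q (n+1) (k+1) (by push_cast; ring) (by push_cast; ring) (by push_cast; ring)
  have E3 : cc (α+1) q n k = poch (-(n:ℝ)) k * poch (-(n:ℝ) - q - 1/2) k /
      ((k.factorial : ℝ) * poch (-(2*(n:ℝ)) - α - q - 1/2 - 1) k) :=
    cc_eval (α+1) q n k rfl rfl (by ring)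
  have mL : cc (α+1) q (n+1) (k+1) * (((k+1).factorial : ℝ) *
      poch (-(2*(n:ℝ)) - α - q - 1/2 - 3) (k+1))
      = poch (-(n:ℝ) - 1) (k+1) * poch (-(n:ℝ) - 1 - q - 1/2) (k+1) := by
    rw [EL]; exact div_mul_cancel₀ _ (mul_ne_zero hf1 hP3)
  have m1 : cc α q (n+1) (k+1) * (((k+1).factorial : ℝ) *
      poch (-(2*(n:ℝ)) - α - q - 1/2 - 2) (k+1))
      = poch (-(n:ℝ) - 1) (k+1) * poch (-(n:ℝ) - 1 - q - 1/2) (k+1) := by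
    rw [E1]; exact div_mul_cancel₀ _ (mul_ne_zero hf1 hP2)
  have m3 : cc (α+1) q n k * ((k.factorial : ℝ) * poch (-(2*(n:ℝ)) - α - q - 1/2 - 1) k)
      = poch (-(n:ℝ)) k * poch (-(n:ℝ) - q - 1/2) k := by
    rw [E3]; exact div_mul_cancel₀ _ (mul_ne_zero hf hP0)
  rw [pNU, pNV, hfact] at mL m1
  have mL' : cc (α+1) q (n+1) (k+1) * (((k:ℝ)+1) * (k.factorial : ℝ) *
      ((-(2*(n:ℝ)) - α - q - 1/2 - 3) * ((-(2*(n:ℝ)) - α - q - 1/2 - 2) *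
        ((-(2*(n:ℝ)) - α - q - 1/2 - 1) * poch (-(2*(n:ℝ)) - α - q - 1/2) k))))
      = (-(n:ℝ) - 1) * poch (-(n:ℝ)) k * ((-(n:ℝ) - 1 - q - 1/2) * poch (-(n:ℝ) - q - 1/2) k)
        * ((-(2*(n:ℝ)) - α - q - 1/2 + k - 2) * (-(2*(n:ℝ)) - α - q - 1/2 + k - 1)) := by
    linear_combination ((-(2*(n:ℝ)) - α - q - 1/2 + k - 2)
        * (-(2*(n:ℝ)) - α - q - 1/2 + k - 1)) * mL
      - (cc (α+1) q (n+1) (k+1) * (((k:ℝ)+1) * (k.factorial : ℝ))) * r4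
  have m1' : cc α q (n+1) (k+1) * (((k:ℝ)+1) * (k.factorial : ℝ) *
      ((-(2*(n:ℝ)) - α - q - 1/2 - 2) * ((-(2*(n:ℝ)) - α - q - 1/2 - 1) *
        poch (-(2*(n:ℝ)) - α - q - 1/2) k)))
      = (-(n:ℝ) - 1) * poch (-(n:ℝ)) k * ((-(n:ℝ) - 1 - q - 1/2) * poch (-(n:ℝ) - q - 1/2) k)
        * (-(2*(n:ℝ)) - α - q - 1/2 + k - 1) := by
    linear_combination (-(2*(n:ℝ)) - α - q - 1/2 + k - 1) * m1
      - (cc α q (n+1) (k+1) * (((k:ℝ)+1) * (k.factorial : ℝ))) * r3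
  have m3' : cc (α+1) q n k * ((k.factorial : ℝ) * ((-(2*(n:ℝ)) - α - q - 1/2 - 1) *
      poch (-(2*(n:ℝ)) - α - q - 1/2) k))
      = poch (-(n:ℝ)) k * poch (-(n:ℝ) - q - 1/2) k * (-(2*(n:ℝ)) - α - q - 1/2 + k - 1) := by
    linear_combination (-(2*(n:ℝ)) - α - q - 1/2 + k - 1) * m3
      - (cc (α+1) q n k * (k.factorial : ℝ)) * r2
  have hγ : (-2 * ((n:ℝ)+1) * (2*((n:ℝ)+1) + 2*q + 1) /
        ((4*((n:ℝ)+1) + 2*α + 2*q + 1) * (4*((n:ℝ)+1) + 2*α + 2*q + 3)))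
      * ((4*((n:ℝ)+1) + 2*α + 2*q + 1) * (4*((n:ℝ)+1) + 2*α + 2*q + 3))
      = -2 * ((n:ℝ)+1) * (2*((n:ℝ)+1) + 2*q + 1) :=
    div_mul_cancel₀ _ (mul_ne_zero hd1 hd2)
  apply mul_right_cancel₀ hT
  linear_combination
    ((4*((n:ℝ)+1) + 2*α + 2*q + 1) * (4*((n:ℝ)+1) + 2*α + 2*q + 3)) * mL'
    - ((-(2*(n:ℝ)) - α - q - 1/2 - 3) *
        ((4*((n:ℝ)+1) + 2*α + 2*q + 1) * (4*((n:ℝ)+1) + 2*α + 2*q + 3))) * m1'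
    + (cc (α+1) q n k * (((k:ℝ)+1) * (k.factorial : ℝ) * poch (-(2*(n:ℝ)) - α - q - 1/2) k
        * (-(2*(n:ℝ)) - α - q - 1/2 - 1) * (-(2*(n:ℝ)) - α - q - 1/2 - 2)
        * (-(2*(n:ℝ)) - α - q - 1/2 - 3))) * hγ
    + ((-2 * ((n:ℝ)+1) * (2*((n:ℝ)+1) + 2*q + 1)) * (((k:ℝ)+1)
        * (-(2*(n:ℝ)) - α - q - 1/2 - 2) * (-(2*(n:ℝ)) - α - q - 1/2 - 3))) * m3'
noncomputable def Peven' (α : ℝ) (q n : ℕ) (x : ℝ) : ℝ :=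
  ∑ k ∈ Finset.range (n + 1), cc α q n k * x ^ (2*n - 2*k)

lemma poch_neg_nat (n : ℕ) : poch (-(n:ℝ)) (n+1) = 0 := by
  apply Finset.prod_eq_zero (Finset.self_mem_range_succ n)
  simp

lemma cc0 (α : ℝ) (q n : ℕ) : cc α q n 0 = 1 := by
  simp [cc, poch_zero]

lemma cc_top (α : ℝ) (q n : ℕ) : cc α q n (n+1) = 0 := by
  simp [cc, poch_neg_nat]

lemma recB (α : ℝ) (hα : -1 < α) (q n : ℕ) (x : ℝ) :
    Peven' α q (n+1) x = (x^2 - 1) * Peven' (α+1) q n x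
      - (-2 * ((n:ℝ) + α + 1) * (2*(n:ℝ) + 2*α + 2*q + 3) /
          ((4*(n:ℝ) + 2*α + 2*q + 3) * (4*(n:ℝ) + 2*α + 2*q + 5))) * Peven' α q n x := by
  have hL : Peven' α q (n+1) x
      = (∑ k ∈ Finset.range (n+1), cc α q (n+1) (k+1) * x^(2*n-2*k)) + x^(2*(n+1)) := by
    rw [Peven', Finset.sum_range_succ']
    congr 1
    · apply Finset.sum_congr rfl
      intro k _
      congr 2
      omega
    · rw [cc0]
      norm_num
  have hshift : x^2 * Peven' (α+1) q n x
      = (∑ k ∈ Finset.range (n+1), cc (α+1) q n (k+1) * x^(2*n-2*k)) + x^(2*(n+1)) := by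
    rw [Peven', Finset.mul_sum]
    have step1 : ∀ k ∈ Finset.range (n+1),
        x^2 * (cc (α+1) q n k * x^(2*n-2*k)) = cc (α+1) q n k * x^(2*(n+1)-2*k) := by
      intro k hk
      have hk' : k ≤ n := Nat.lt_succ_iff.mp (Finset.mem_range.mp hk)
      have he : 2*(n+1)-2*k = (2*n-2*k) + 2 := by omega
      rw [he, pow_add]
      ring
    rw [Finset.sum_congr rfl step1]
    have ext : (∑ k ∈ Finset.range (n+2), cc (α+1) q n k * x^(2*(n+1)-2*k))
        = ∑ k ∈ Finset.range (n+1), cc (α+1) q n k * x^(2*(n+1)-2*k) := by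
      rw [Finset.sum_range_succ, cc_top]
      simp
    rw [← ext, Finset.sum_range_succ']
    congr 1
    · apply Finset.sum_congr rfl
      intro k _
      congr 2
      omega
    · rw [cc0]
      norm_num
  have key : (∑ k ∈ Finset.range (n+1), cc α q (n+1) (k+1) * x^(2*n-2*k))
      = ∑ k ∈ Finset.range (n+1),
          (cc (α+1) q n (k+1) * x^(2*n-2*k) - cc (α+1) q n k * x^(2*n-2*k)
            - (-2 * ((n:ℝ) + α + 1) * (2*(n:ℝ) + 2*α + 2*q + 3) /
                ((4*(n:ℝ) + 2*α + 2*q + 3) * (4*(n:ℝ) + 2*α + 2*q + 5)))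
              * (cc α q n k * x^(2*n-2*k))) := by
    apply Finset.sum_congr rfl
    intro k hk
    have hk' : k ≤ n := Nat.lt_succ_iff.mp (Finset.mem_range.mp hk)
    rw [keyB α hα q n k hk']
    ring
  rw [hL, key]
  rw [Finset.sum_sub_distrib, Finset.sum_sub_distrib, ← Finset.mul_sum]
  have hPe : Peven' (α+1) q n x = ∑ k ∈ Finset.range (n+1), cc (α+1) q n k * x^(2*n-2*k) := rfl
  have hPe2 : Peven' α q n x = ∑ k ∈ Finset.range (n+1), cc α q n k * x^(2*n-2*k) := rfl
  rw [sub_mul, one_mul, hshift, hPe, hPe2]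
  ring

lemma recA (α : ℝ) (hα : -1 < α) (q n : ℕ) (x : ℝ) :
    Peven' (α+1) q (n+1) x = Peven' α q (n+1) x
      - (-2 * ((n:ℝ)+1) * (2*((n:ℝ)+1) + 2*q + 1) /
          ((4*((n:ℝ)+1) + 2*α + 2*q + 1) * (4*((n:ℝ)+1) + 2*α + 2*q + 3)))
        * Peven' (α+1) q n x := by
  have hL : ∀ β : ℝ, Peven' β q (n+1) x
      = (∑ k ∈ Finset.range (n+1), cc β q (n+1) (k+1) * x^(2*n-2*k)) + x^(2*(n+1)) := by
    intro β
    rw [Peven', Finset.sum_range_succ']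
    congr 1
    · apply Finset.sum_congr rfl
      intro k _
      congr 2
      omega
    · rw [cc0]
      norm_num
  have key : (∑ k ∈ Finset.range (n+1), cc (α+1) q (n+1) (k+1) * x^(2*n-2*k))
      = ∑ k ∈ Finset.range (n+1),
          (cc α q (n+1) (k+1) * x^(2*n-2*k)
            - (-2 * ((n:ℝ)+1) * (2*((n:ℝ)+1) + 2*q + 1) /
                ((4*((n:ℝ)+1) + 2*α + 2*q + 1) * (4*((n:ℝ)+1) + 2*α + 2*q + 3)))
              * (cc (α+1) q n k * x^(2*n-2*k))) := by
    apply Finset.sum_congr rfl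
    intro k hk
    have hk' : k ≤ n := Nat.lt_succ_iff.mp (Finset.mem_range.mp hk)
    rw [keyA α hα q n k hk']
    ring
  rw [hL, hL, key, Finset.sum_sub_distrib, ← Finset.mul_sum]
  have hPe : Peven' (α+1) q n x = ∑ k ∈ Finset.range (n+1), cc (α+1) q n k * x^(2*n-2*k) := rfl
  rw [hPe]
  ring

noncomputable def gammaAux (α : ℝ) (q : ℕ) : ℕ → ℝ := fun j =>
  if j % 2 = 0 then
    -2 * ((j/2 : ℕ) : ℝ) * (2 * ((j/2 : ℕ) : ℝ) + 2 * q + 1) /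
      ((4 * ((j/2 : ℕ) : ℝ) + 2 * α + 2 * q + 1) * (4 * ((j/2 : ℕ) : ℝ) + 2 * α + 2 * q + 3))
  else
    -2 * (((j/2 : ℕ) : ℝ) + α + 1) * (2 * ((j/2 : ℕ) : ℝ) + 2 * α + 2 * q + 3) /
      ((4 * ((j/2 : ℕ) : ℝ) + 2 * α + 2 * q + 3) * (4 * ((j/2 : ℕ) : ℝ) + 2 * α + 2 * q + 5))

/-- The sequence `(P_n^{α,q})` satisfies the three-term recurrence
`P_{n+2} = (x − (−1)^n) P_{n+1} − γ_{n+1} P_n` with `P_0 = 1`, `P_1 = x + 1`,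
`γ_{2m} = −2m(2m+2q+1)/((4m+2α+2q+1)(4m+2α+2q+3))` for `m ≥ 1`, and
`γ_{2m+1} = −2(m+α+1)(2m+2α+2q+3)/((4m+2α+2q+3)(4m+2α+2q+5))` for `m ≥ 0`. -/
theorem three_term_recurrence (α : ℝ) (hα : -1 < α) (q : ℕ) :
    (∀ x : ℝ, P α q 0 x = 1) ∧ (∀ x : ℝ, P α q 1 x = x + 1) ∧
    ∃ γ : ℕ → ℝ,
      (∀ m : ℕ, 1 ≤ m →
        γ (2 * m) = -2 * (m : ℝ) * (2 * (m : ℝ) + 2 * q + 1) /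
            ((4 * (m : ℝ) + 2 * α + 2 * q + 1) * (4 * (m : ℝ) + 2 * α + 2 * q + 3))) ∧
      (∀ m : ℕ,
        γ (2 * m + 1) = -2 * ((m : ℝ) + α + 1) * (2 * (m : ℝ) + 2 * α + 2 * q + 3) /
            ((4 * (m : ℝ) + 2 * α + 2 * q + 3) * (4 * (m : ℝ) + 2 * α + 2 * q + 5))) ∧
      (∀ n : ℕ, ∀ x : ℝ,
        P α q (n + 2) x = (x - (-1 : ℝ) ^ n) * P α q (n + 1) x - γ (n + 1) * P α q n x) := by
  have hPP : ∀ (β : ℝ) (m : ℕ) (y : ℝ), Peven β q m y = Peven' β q m y := fun _ _ _ => rfl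
  have hPeven0 : ∀ (β : ℝ) (y : ℝ), Peven β q 0 y = 1 := by
    intro β y
    rw [hPP, Peven']
    simp [cc0]
  have hPe : ∀ (j : ℕ) (y : ℝ), Even j → P α q j y = Peven' α q (j/2) y := by
    intro j y hj
    rw [P, if_pos hj, hPP]
  have hPo : ∀ (j : ℕ) (y : ℝ), ¬ Even j → P α q j y = (1 + y) * Peven' (α+1) q (j/2) y := by
    intro j y hj
    rw [P, if_neg hj, Podd, hPP]
  refine ⟨?_, ?_, gammaAux α q, ?_, ?_, ?_⟩
  · intro y
    rw [hPe 0 y Even.zero]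
    show Peven' α q 0 y = 1
    rw [← hPP]
    exact hPeven0 α y
  · intro y
    rw [hPo 1 y (by rw [Nat.even_iff]; omega)]
    show (1 + y) * Peven' (α+1) q 0 y = y + 1
    rw [← hPP, hPeven0]
    ring
  · intro m hm
    show (if (2*m) % 2 = 0 then _ else _) = _
    rw [if_pos (by omega), show (2*m)/2 = m by omega]
  · intro m
    show (if (2*m+1) % 2 = 0 then _ else _) = _
    rw [if_neg (by omega), show (2*m+1)/2 = m by omega]
  · intro n y
    rcases Nat.even_or_odd n with he | ho
    · obtain ⟨m, rfl⟩ := he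
      have e2 : Even (m + m + 2) := ⟨m+1, by ring⟩
      have e0 : Even (m + m) := ⟨m, rfl⟩
      have o1 : ¬ Even (m + m + 1) := by rw [Nat.even_iff]; omega
      rw [hPe _ y e2, hPo _ y o1, hPe _ y e0,
        show (m+m+2)/2 = m+1 by omega, show (m+m+1)/2 = m by omega,
        show (m+m)/2 = m by omega, Even.neg_one_pow e0]
      have hγ : gammaAux α q (m + m + 1)
          = -2 * ((m:ℝ) + α + 1) * (2*(m:ℝ) + 2*α + 2*q + 3) /
            ((4*(m:ℝ) + 2*α + 2*q + 3) * (4*(m:ℝ) + 2*α + 2*q + 5)) := by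
        show (if (m+m+1) % 2 = 0 then _ else _) = _
        rw [if_neg (by omega), show (m+m+1)/2 = m by omega]
      rw [hγ, recB α hα q m y]
      ring
    · obtain ⟨m, rfl⟩ := ho
      have o2 : ¬ Even (2*m + 1 + 2) := by rw [Nat.even_iff]; omega
      have e1 : Even (2*m + 1 + 1) := ⟨m+1, by ring⟩
      have o0 : ¬ Even (2*m + 1) := by rw [Nat.even_iff]; omega
      rw [hPo _ y o2, hPe _ y e1, hPo _ y o0,
        show (2*m+1+2)/2 = m+1 by omega, show (2*m+1+1)/2 = m+1 by omega,
        show (2*m+1)/2 = m by omega, Odd.neg_one_pow ⟨m, rfl⟩]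
      have hγ : gammaAux α q (2*m + 1 + 1)
          = -2 * ((m:ℝ)+1) * (2*((m:ℝ)+1) + 2*q + 1) /
            ((4*((m:ℝ)+1) + 2*α + 2*q + 1) * (4*((m:ℝ)+1) + 2*α + 2*q + 3)) := by
        show (if (2*m+1+1) % 2 = 0 then _ else _) = _
        rw [if_pos (by omega), show (2*m+1+1)/2 = m+1 by omega]
        push_cast
        ring_nf
      rw [hγ, recA α hα q m y]
      ring
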